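/- arXiv:1909.07162 — 6 statements merged into one kernel-verified Lean document; each statement's English description precedes it below -/
import Mathlib

section
/- Let k ≥ 2 be an integer and let I ⊂ (0,∞) be an interval closed under multiplication with 1 ∈ I. For positive functions f, g : I → (0,∞), the identity g(x₁⋯x_k)/f(x₁⋯x_k) = (g(x₁)+⋯+g(x_k))/(f(x₁)+⋯+f(x_k)) holds for all x₁,…,x_k ∈ I if and only if there exists c > 0 such that g = c·f. -/
open Set Finset

theorem div_eq_div_of_div_eq_mediant {K : Type*} [Field K] [LinearOrder K] [IsStrictOrderedRing K]
    {a b c d : K} (ha : 0 < a) (hc : 0 < c) (h : b / a = (b + d) / (a + c)) :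
    b / a = d / c := by
  rw [div_eq_div_iff ha.ne' (by positivity)] at h
  rw [div_eq_div_iff ha.ne' hc.ne']
  linarith

section

variable {I : Set ℝ} {f g : ℝ → ℝ}

theorem exists_const_mul_of_ratio_prod_eq_ratio_sum {n : ℕ} (h1 : (1 : ℝ) ∈ I)
    (hf : ∀ x ∈ I, 0 < f x) (hg : ∀ x ∈ I, 0 < g x)
    (h : ∀ x : Fin (n + 2) → ℝ, (∀ i, x i ∈ I) →
      g (∏ i, x i) / f (∏ i, x i) = (∑ i, g (x i)) / (∑ i, f (x i))) :
    ∃ c > 0, ∀ x ∈ I, g x = c * f x := by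
  have hf1 := hf 1 h1
  refine ⟨g 1 / f 1, div_pos (hg 1 h1) hf1, fun x hx => ?_⟩
  -- Test the identity on `(x, 1, …, 1)`: the ratio at `x` equals a mediant of itself and `g 1 / f 1`.
  have hx1 := h (Fin.cons x fun _ => 1) (Fin.cases hx fun _ => h1)
  simp only [Fin.prod_univ_succ, Fin.sum_univ_succ, Fin.cons_zero, Fin.cons_succ, prod_const_one,
    mul_one, sum_const, card_univ, Fintype.card_fin, nsmul_eq_mul] at hx1
  have hratio := div_eq_div_of_div_eq_mediant (hf x hx) (by positivity) hx1
  rw [mul_div_mul_left _ _ (by positivity), div_eq_div_iff (hf x hx).ne' hf1.ne'] at hratio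
  rw [div_mul_eq_mul_div, eq_div_iff hf1.ne']
  linarith

theorem ratio_prod_eq_ratio_sum_of_eq_const_mul {ι : Type*} [Fintype ι] [Nonempty ι] {c : ℝ}
    (hmul : ∀ x ∈ I, ∀ y ∈ I, x * y ∈ I) (h1 : (1 : ℝ) ∈ I) (hf : ∀ x ∈ I, 0 < f x)
    (hfg : ∀ x ∈ I, g x = c * f x) (x : ι → ℝ) (hx : ∀ i, x i ∈ I) :
    g (∏ i, x i) / f (∏ i, x i) = (∑ i, g (x i)) / (∑ i, f (x i)) := by
  have hprod : ∏ i, x i ∈ I := prod_induction x (· ∈ I) (fun a b ha hb => hmul a ha b hb) h1 fun i _ => hx i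
  have hsum : ∑ i, g (x i) = c * ∑ i, f (x i) := by
    rw [mul_sum]
    exact sum_congr rfl fun i _ => hfg (x i) (hx i)
  have hsum_pos : 0 < ∑ i, f (x i) := sum_pos (fun i _ => hf (x i) (hx i)) univ_nonempty
  rw [hfg _ hprod, hsum, mul_div_cancel_right₀ _ (hf _ hprod).ne',
    mul_div_cancel_right₀ _ hsum_pos.ne']

end

theorem stmt_0_general (k : ℕ) (hk : 2 ≤ k) (I : Set ℝ)
    (hmul : ∀ x ∈ I, ∀ y ∈ I, x * y ∈ I) (h1 : (1:ℝ) ∈ I)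
    (f g : ℝ → ℝ) (hf : ∀ x ∈ I, 0 < f x) (hg : ∀ x ∈ I, 0 < g x) :
    (∀ x : Fin k → ℝ, (∀ i, x i ∈ I) →
        g (∏ i, x i) / f (∏ i, x i) = (∑ i, g (x i)) / (∑ i, f (x i))) ↔
      ∃ c > 0, ∀ x ∈ I, g x = c * f x := by
  obtain ⟨n, rfl⟩ : ∃ n, k = n + 2 := ⟨k - 2, by omega⟩
  constructor
  · exact exists_const_mul_of_ratio_prod_eq_ratio_sum h1 hf hg
  · rintro ⟨c, -, hfg⟩
    exact ratio_prod_eq_ratio_sum_of_eq_const_mul hmul h1 hf hfg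

theorem stmt_0 (k : ℕ) (hk : 2 ≤ k) (I : Set ℝ) (hI : I ⊆ Set.Ioi 0)
    (hIint : I.OrdConnected) (hmul : ∀ x ∈ I, ∀ y ∈ I, x * y ∈ I) (h1 : (1:ℝ) ∈ I)
    (f g : ℝ → ℝ) (hf : ∀ x ∈ I, 0 < f x) (hg : ∀ x ∈ I, 0 < g x) :
    (∀ x : Fin k → ℝ, (∀ i, x i ∈ I) →
        g (∏ i, x i) / f (∏ i, x i) = (∑ i, g (x i)) / (∑ i, f (x i))) ↔
      ∃ c > 0, ∀ x ∈ I, g x = c * f x :=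
  stmt_0_general k hk I hmul h1 f g hf hg
end

section
/- Let k ≥ 2 be an integer. If f, g : (1,∞) → (0,∞) satisfy (g(x₁⋯x_k))/(f(x₁⋯x_k)) = (g(x₁)+⋯+g(x_k))/(f(x₁)+⋯+f(x_k)) for all x₁,…,x_k ∈ (1,∞), and the limit c := lim_{x→1⁺} g(x)/f(x) exists, then g(x) = c·f(x) for all x ∈ (1,∞). -/
/-! Taking all `xᵢ = a` in the functional equation gives `h (a ^ k) = h a` for the ratio `h = g / f`.
Hence `h x = h (x ^ (1 / k ^ n))` for every `n`, and `x ^ (1 / k ^ n)` tends to `1` from the right,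
so `h x` equals the limit `c` of `h` at `1⁺`. -/

open Set Filter Topology

lemma tendsto_rpow_inv_natCast_nhdsGT_one {x : ℝ} (hx : 1 < x) :
    Tendsto (fun m : ℕ => x ^ (m⁻¹ : ℝ)) atTop (𝓝[>] 1) := by
  refine tendsto_nhdsWithin_of_tendsto_nhds_of_eventually_within _ ?_ ?_
  · have hinv : Tendsto (fun m : ℕ => (m⁻¹ : ℝ)) atTop (𝓝 0) :=
      tendsto_inv_atTop_zero.comp tendsto_natCast_atTop_atTop
    simpa [Function.comp_def] using
      ((Real.continuousAt_const_rpow (by positivity : x ≠ 0)).tendsto.comp hinv)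
  · filter_upwards [eventually_gt_atTop 0] with m hm
    exact Real.one_lt_rpow hx (by positivity)

lemma map_pow_pow_eq {h : ℝ → ℝ} {k : ℕ} (hk : k ≠ 0) (hpow : ∀ a, 1 < a → h (a ^ k) = h a)
    (n : ℕ) {a : ℝ} (ha : 1 < a) : h (a ^ k ^ n) = h a := by
  induction n with
  | zero => simp
  | succ n ih =>
    rw [pow_succ, pow_mul, hpow _ (one_lt_pow₀ ha (pow_ne_zero n hk)), ih]

theorem eq_of_map_pow_eq_of_tendsto {h : ℝ → ℝ} {k : ℕ} (hk : 1 < k)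
    (hpow : ∀ a, 1 < a → h (a ^ k) = h a) {c : ℝ} (hlim : Tendsto h (𝓝[>] 1) (𝓝 c))
    {x : ℝ} (hx : 1 < x) : h x = c := by
  have hk0 : k ≠ 0 := by omega
  have hroot : Tendsto (fun n : ℕ => x ^ ((k ^ n : ℕ)⁻¹ : ℝ)) atTop (𝓝[>] 1) :=
    (tendsto_rpow_inv_natCast_nhdsGT_one hx).comp (tendsto_pow_atTop_atTop_of_one_lt hk)
  have hconst : ∀ n : ℕ, h (x ^ ((k ^ n : ℕ)⁻¹ : ℝ)) = h x := fun n => by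
    have hroot_gt : 1 < x ^ ((k ^ n : ℕ)⁻¹ : ℝ) := Real.one_lt_rpow hx (by positivity)
    conv_rhs => rw [← Real.rpow_inv_natCast_pow (by positivity : 0 ≤ x) (pow_ne_zero n hk0)]
    exact (map_pow_pow_eq hk0 hpow n hroot_gt).symm
  refine tendsto_nhds_unique ?_ (hlim.comp hroot)
  simpa only [Function.comp_def, hconst] using tendsto_const_nhds

lemma ratio_pow_eq_of_ratio_prod_eq {k : ℕ} (hk : k ≠ 0) {f g : ℝ → ℝ}
    (heq : ∀ x : Fin k → ℝ, (∀ i, x i ∈ Ioi (1:ℝ)) →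
        g (∏ i, x i) / f (∏ i, x i) = (∑ i, g (x i)) / (∑ i, f (x i)))
    {a : ℝ} (ha : 1 < a) : g (a ^ k) / f (a ^ k) = g a / f a := by
  have h := heq (fun _ => a) (fun _ => ha)
  simp only [Finset.prod_const, Finset.sum_const, Finset.card_univ, Fintype.card_fin,
    nsmul_eq_mul] at h
  rw [h, mul_div_mul_left _ _ (Nat.cast_ne_zero.mpr hk)]

theorem stmt_1_general (k : ℕ) (hk : 2 ≤ k) (f g : ℝ → ℝ)
    (hf : ∀ x ∈ Set.Ioi (1:ℝ), 0 < f x)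
    (heq : ∀ x : Fin k → ℝ, (∀ i, x i ∈ Set.Ioi (1:ℝ)) →
        g (∏ i, x i) / f (∏ i, x i) = (∑ i, g (x i)) / (∑ i, f (x i)))
    (c : ℝ) (hlim : Tendsto (fun x => g x / f x) (nhdsWithin 1 (Set.Ioi 1)) (nhds c)) :
    ∀ x ∈ Set.Ioi (1:ℝ), g x = c * f x := by
  intro x hx
  have hratio : g x / f x = c :=
    eq_of_map_pow_eq_of_tendsto (h := fun x => g x / f x) hk
      (fun _ ha => ratio_pow_eq_of_ratio_prod_eq (by omega) heq ha) hlim hx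
  rw [← hratio, div_mul_cancel₀ _ (hf x hx).ne']

theorem stmt_1 (k : ℕ) (hk : 2 ≤ k) (f g : ℝ → ℝ)
    (hf : ∀ x ∈ Set.Ioi (1:ℝ), 0 < f x) (hg : ∀ x ∈ Set.Ioi (1:ℝ), 0 < g x)
    (heq : ∀ x : Fin k → ℝ, (∀ i, x i ∈ Set.Ioi (1:ℝ)) →
        g (∏ i, x i) / f (∏ i, x i) = (∑ i, g (x i)) / (∑ i, f (x i)))
    (c : ℝ) (hlim : Tendsto (fun x => g x / f x) (nhdsWithin 1 (Set.Ioi 1)) (nhds c)) :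
    ∀ x ∈ Set.Ioi (1:ℝ), g x = c * f x :=
  stmt_1_general k hk f g hf heq c hlim
end

section
/- Let k ≥ 2 be an integer and p > 1. A function f : [p,∞) → (0,∞) satisfies f(x) = (x/k)·f(x^k) for all x ≥ p if and only if for every n ∈ ℕ (including 0) and every x ∈ [p^(k^n), p^(k^(n+1))) one has f(x) = k^n · x^((k^(-n)-1)/(k-1)) · f₀(x^(k^(-n))), where f₀ is the restriction of f to [p, p^k). -/
/-!
Write `F n x = k ^ n * x ^ ((k ^ (-n) - 1) / (k - 1)) * f (x ^ (k ^ (-n)))`. The exponents satisfy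
`F (n + 1) (x ^ k) = (k / x) * F n x`, which is exactly the functional equation in the form
`f (x ^ k) = (k / x) * f x`; and `x ↦ x ^ k` maps `[p ^ k ^ n, p ^ k ^ (n + 1))` onto the next
interval. So either side transports along these intervals, by induction on `n` in one direction and
by locating `x` in its interval in the other.
-/

open Real Set

theorem exists_le_and_lt_succ_of_exists_lt {α : Type*} [LinearOrder α] {a : ℕ → α} {x : α}
    (h0 : a 0 ≤ x) (hlt : ∃ m, x < a m) : ∃ n, a n ≤ x ∧ x < a (n + 1) := by
  classical
  obtain ⟨n, hn⟩ : ∃ n, Nat.find hlt = n + 1 :=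
    Nat.exists_eq_succ_of_ne_zero fun h ↦ (Nat.find_spec hlt).not_ge (h ▸ h0)
  exact ⟨n, not_lt.1 (Nat.find_min hlt (by omega)), hn ▸ Nat.find_spec hlt⟩

section DoublyExponentialIntervals

variable {p x : ℝ} {k : ℕ}

theorem exists_mem_Ico_pow_pow (hp : 1 < p) (hk : 1 < k) (hx : p ≤ x) :
    ∃ n, x ∈ Ico (p ^ k ^ n) (p ^ k ^ (n + 1)) := by
  refine exists_le_and_lt_succ_of_exists_lt (a := fun n ↦ p ^ k ^ n) (by simpa using hx) ?_
  obtain ⟨m, hm⟩ := pow_unbounded_of_one_lt x hp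
  exact ⟨m, hm.trans_le (pow_le_pow_right₀ hp.le (Nat.lt_pow_self hk).le)⟩

theorem pow_mem_Ico_pow_pow_iff (hp : 0 ≤ p) (hx : 0 ≤ x) (hk : k ≠ 0) (n : ℕ) :
    x ^ k ∈ Ico (p ^ k ^ (n + 1)) (p ^ k ^ (n + 2)) ↔ x ∈ Ico (p ^ k ^ n) (p ^ k ^ (n + 1)) := by
  simp only [mem_Ico, pow_succ k, pow_mul]
  rw [pow_le_pow_iff_left₀ (by positivity) hx hk, pow_lt_pow_iff_left₀ hx (by positivity) hk]

end DoublyExponentialIntervals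

theorem mul_zpow_neg_succ_sub_one_div {a : ℝ} (ha : a ≠ 0) (ha1 : a ≠ 1) (n : ℕ) :
    a * ((a ^ (-((n + 1 : ℕ) : ℤ)) - 1) / (a - 1)) = (a ^ (-(n : ℤ)) - 1) / (a - 1) - 1 := by
  have : a - 1 ≠ 0 := sub_ne_zero.2 ha1
  rw [Nat.cast_succ, neg_add, zpow_add₀ ha, zpow_neg_one]
  field_simp
  ring

noncomputable def levelFormula (k : ℕ) (f : ℝ → ℝ) (n : ℕ) (x : ℝ) : ℝ :=
  (k : ℝ) ^ n * x ^ (((k : ℝ) ^ (-(n : ℤ)) - 1) / ((k : ℝ) - 1)) * f (x ^ ((k : ℝ) ^ (-(n : ℤ))))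

theorem levelFormula_succ_pow {k : ℕ} (hk : 1 < k) (f : ℝ → ℝ) (n : ℕ) {x : ℝ} (hx : 0 < x) :
    levelFormula k f (n + 1) (x ^ k) = k / x * levelFormula k f n x := by
  have hk0 : (k : ℝ) ≠ 0 := by positivity
  have hk1 : (k : ℝ) ≠ 1 := by exact_mod_cast hk.ne'
  have hzpow : (k : ℝ) * (k : ℝ) ^ (-((n + 1 : ℕ) : ℤ)) = (k : ℝ) ^ (-(n : ℤ)) := by
    rw [Nat.cast_succ, neg_add, zpow_add₀ hk0, zpow_neg_one]
    field_simp
  simp only [levelFormula, ← rpow_natCast x k, ← rpow_mul hx.le, hzpow,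
    mul_zpow_neg_succ_sub_one_div hk0 hk1, rpow_sub_one hx.ne']
  field_simp
  ring

theorem stmt_4_general (k : ℕ) (hk : 2 ≤ k) (p : ℝ) (hp : 1 < p)
    (f : ℝ → ℝ) :
    (∀ x ≥ p, f x = x / k * f (x ^ k)) ↔
      ∀ n : ℕ, ∀ x : ℝ, p ^ (k ^ n) ≤ x → x < p ^ (k ^ (n + 1)) →
        f x = (k : ℝ) ^ n * x ^ (((k : ℝ) ^ (-(n : ℤ)) - 1) / ((k : ℝ) - 1)) *
          f (x ^ ((k : ℝ) ^ (-(n : ℤ)))) := by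
  have hk1 : 1 < k := by omega
  have hk0 : k ≠ 0 := by omega
  have hpos : ∀ {n x}, p ^ k ^ n ≤ x → 0 < x := fun h ↦ (by positivity : 0 < p ^ _).trans_le h
  change _ ↔ ∀ n x, p ^ k ^ n ≤ x → x < p ^ k ^ (n + 1) → f x = levelFormula k f n x
  constructor
  · intro hf n
    induction n with
    | zero => intro x _ _; simp [levelFormula]
    | succ n ih =>
      intro x hx₁ hx₂
      set y := x ^ (k⁻¹ : ℝ)
      have hyx : y ^ k = x := rpow_inv_natCast_pow (hpos hx₁).le hk0
      have hy : y ∈ Ico (p ^ k ^ n) (p ^ k ^ (n + 1)) := by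
        rw [← pow_mem_Ico_pow_pow_iff (by positivity) (rpow_nonneg (hpos hx₁).le _) hk0, hyx]
        exact ⟨hx₁, hx₂⟩
      have hfy := hf y ((le_self_pow₀ hp.le (by positivity)).trans hy.1)
      rw [← hyx, levelFormula_succ_pow hk1 f n (hpos hy.1), ← ih y hy.1 hy.2, hfy]
      field_simp [(hpos hy.1).ne']
  · intro h x hx
    obtain ⟨n, hn⟩ := exists_mem_Ico_pow_pow hp hk1 hx
    have hxk := (pow_mem_Ico_pow_pow_iff (by positivity) (hpos hn.1).le hk0 n).2 hn
    rw [h (n + 1) _ hxk.1 hxk.2, levelFormula_succ_pow hk1 f n (hpos hn.1), ← h n x hn.1 hn.2]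
    field_simp [(hpos hn.1).ne']

theorem stmt_4 (k : ℕ) (hk : 2 ≤ k) (p : ℝ) (hp : 1 < p)
    (f : ℝ → ℝ) (hfpos : ∀ x ≥ p, 0 < f x) :
    (∀ x ≥ p, f x = x / k * f (x ^ k)) ↔
      ∀ n : ℕ, ∀ x : ℝ, p ^ (k ^ n) ≤ x → x < p ^ (k ^ (n + 1)) →
        f x = (k : ℝ) ^ n * x ^ (((k : ℝ) ^ (-(n : ℤ)) - 1) / ((k : ℝ) - 1)) *
          f (x ^ ((k : ℝ) ^ (-(n : ℤ)))) :=
  stmt_4_general k hk p hp f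
end

section
/- Let k ≥ 2 and let f : (1,∞) → (0,∞). If the function L_{f,k}(x₁,…,x_k) := (f(x₁)+⋯+f(x_k))/f(x₁⋯x_k) satisfies min(x₁,…,x_k) ≤ L_{f,k}(x₁,…,x_k) ≤ max(x₁,…,x_k) for all x₁,…,x_k ∈ (1,∞), then there exists c > 0 such that f(x) = c·(log x)/x^(1/(k-1)) for all x ∈ (1,∞). -/
open Real Finset Filter Topology

noncomputable def Gf (k : ℕ) (f : ℝ → ℝ) (t : ℝ) : ℝ :=
  f (Real.exp t) * Real.exp (t / ((k:ℝ) - 1))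

section helpers

variable (k : ℕ) (hk : 2 ≤ k) (f : ℝ → ℝ)
    (hfpos : ∀ x > (1:ℝ), 0 < f x)
    (hmean : ∀ x : Fin k → ℝ, (∀ i, 1 < x i) →
        Finset.univ.inf' ⟨⟨0, Nat.zero_lt_of_lt hk⟩, Finset.mem_univ _⟩ x ≤
            (∑ i, f (x i)) / f (∏ i, x i) ∧
          (∑ i, f (x i)) / f (∏ i, x i) ≤
            Finset.univ.sup' ⟨⟨0, Nat.zero_lt_of_lt hk⟩, Finset.mem_univ _⟩ x)

include hk hfpos in
lemma Gf_pos {t : ℝ} (ht : 0 < t) : 0 < Gf k f t := by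
  have h1 : (1:ℝ) < Real.exp t := by
    calc (1:ℝ) = Real.exp 0 := by simp
    _ < Real.exp t := Real.exp_lt_exp.mpr ht
  exact mul_pos (hfpos _ h1) (Real.exp_pos _)

include hk hfpos hmean in
lemma Gkey {ε : ℝ} (hε : 0 < ε) (t : Fin k → ℝ) (ht0 : ∀ i, 0 < t i)
    (htε : ∀ i, t i ≤ ε) :
    Real.exp (-(2*ε)) * ∑ i, Gf k f (t i) ≤ Gf k f (∑ i, t i) ∧
      Gf k f (∑ i, t i) ≤ Real.exp ((k:ℝ)*ε) * ∑ i, Gf k f (t i) := by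
  have hK1 : (1:ℝ) ≤ (k:ℝ) - 1 := by
    have : (2:ℝ) ≤ (k:ℝ) := by exact_mod_cast hk
    linarith
  set x : Fin k → ℝ := fun i => Real.exp (t i) with hxdef
  have hx : ∀ i, 1 < x i := fun i => by
    calc (1:ℝ) = Real.exp 0 := by simp
    _ < Real.exp (t i) := Real.exp_lt_exp.mpr (ht0 i)
  obtain ⟨h1, h2⟩ := hmean x hx
  have hne : (Finset.univ : Finset (Fin k)).Nonempty := ⟨⟨0, Nat.zero_lt_of_lt hk⟩, Finset.mem_univ _⟩
  have hinf : (1:ℝ) ≤ Finset.univ.inf' ⟨⟨0, Nat.zero_lt_of_lt hk⟩, Finset.mem_univ _⟩ x :=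
    Finset.le_inf' _ _ (fun i _ => (hx i).le)
  have hsup : Finset.univ.sup' ⟨⟨0, Nat.zero_lt_of_lt hk⟩, Finset.mem_univ _⟩ x ≤ Real.exp ε :=
    Finset.sup'_le _ _ (fun i _ => Real.exp_le_exp.mpr (htε i))
  have hP : (∏ i, x i) = Real.exp (∑ i, t i) := (Real.exp_sum _ _).symm
  have hs0 : 0 < ∑ i, t i := Finset.sum_pos (fun i _ => ht0 i) hne
  have hsk : ∑ i, t i ≤ (k:ℝ)*ε := by
    calc ∑ i, t i ≤ (Finset.univ : Finset (Fin k)).card • ε :=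
          Finset.sum_le_card_nsmul _ _ _ (fun i _ => htε i)
    _ = (k:ℝ)*ε := by simp [nsmul_eq_mul]
  have hfP : 0 < f (∏ i, x i) := by
    rw [hP]; exact hfpos _ (by calc (1:ℝ) = Real.exp 0 := by simp
                                 _ < _ := Real.exp_lt_exp.mpr hs0)
  have hfxpos : ∀ i, 0 < f (x i) := fun i => hfpos _ (hx i)
  have hS0 : 0 < ∑ i, f (x i) := Finset.sum_pos (fun i _ => hfxpos i) hne
  have hQ1 : (1:ℝ) ≤ (∑ i, f (x i)) / f (∏ i, x i) := le_trans hinf h1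
  have hQ2 : (∑ i, f (x i)) / f (∏ i, x i) ≤ Real.exp ε := le_trans h2 hsup
  have hfS : f (∏ i, x i) ≤ ∑ i, f (x i) := by
    rw [le_div_iff₀ hfP] at hQ1; linarith
  have hSf : ∑ i, f (x i) ≤ Real.exp ε * f (∏ i, x i) := by
    rw [div_le_iff₀ hfP] at hQ2; linarith
  -- compare ∑ f (x i) with ∑ Gf (t i)
  have hterm1 : ∀ i, f (x i) ≤ Gf k f (t i) := by
    intro i
    have : (1:ℝ) ≤ Real.exp (t i / ((k:ℝ)-1)) :=
      Real.one_le_exp (div_nonneg (ht0 i).le (by linarith))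
    calc f (x i) = f (x i) * 1 := by ring
    _ ≤ f (x i) * Real.exp (t i / ((k:ℝ)-1)) := by
        apply mul_le_mul_of_nonneg_left this (hfxpos i).le
    _ = Gf k f (t i) := rfl
  have hterm2 : ∀ i, Gf k f (t i) ≤ Real.exp ε * f (x i) := by
    intro i
    have harg : t i / ((k:ℝ)-1) ≤ ε := le_trans (div_le_self (ht0 i).le hK1) (htε i)
    calc Gf k f (t i) = f (x i) * Real.exp (t i / ((k:ℝ)-1)) := rfl
    _ ≤ f (x i) * Real.exp ε := by
        apply mul_le_mul_of_nonneg_left (Real.exp_le_exp.mpr harg) (hfxpos i).le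
    _ = Real.exp ε * f (x i) := by ring
  have hS_le : ∑ i, f (x i) ≤ ∑ i, Gf k f (t i) :=
    Finset.sum_le_sum (fun i _ => hterm1 i)
  have hG_le : ∑ i, Gf k f (t i) ≤ Real.exp ε * ∑ i, f (x i) := by
    rw [Finset.mul_sum]
    exact Finset.sum_le_sum (fun i _ => hterm2 i)
  -- G of the sum
  have hGs : Gf k f (∑ i, t i) = f (∏ i, x i) * Real.exp ((∑ i, t i) / ((k:ℝ)-1)) := by
    rw [Gf, hP]
  have hexp1 : (1:ℝ) ≤ Real.exp ((∑ i, t i) / ((k:ℝ)-1)) :=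
    Real.one_le_exp (div_nonneg hs0.le (by linarith))
  have hexp2 : Real.exp ((∑ i, t i) / ((k:ℝ)-1)) ≤ Real.exp ((k:ℝ)*ε) :=
    Real.exp_le_exp.mpr (le_trans (div_le_self hs0.le hK1) hsk)
  constructor
  · -- lower bound
    have e1 : Real.exp (-(2*ε)) = Real.exp (-ε) * Real.exp (-ε) := by
      rw [← Real.exp_add]; ring_nf
    have h3 : Real.exp (-ε) * ∑ i, Gf k f (t i) ≤ ∑ i, f (x i) := by
      rw [Real.exp_neg]
      rw [inv_mul_le_iff₀ (Real.exp_pos _)]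
      exact hG_le
    have h4 : Real.exp (-ε) * ∑ i, f (x i) ≤ f (∏ i, x i) := by
      rw [Real.exp_neg, inv_mul_le_iff₀ (Real.exp_pos _)]
      exact hSf
    have h5 : f (∏ i, x i) ≤ Gf k f (∑ i, t i) := by
      rw [hGs]
      nlinarith [hfP, hexp1]
    have hepos := Real.exp_pos (-ε)
    nlinarith [h3, h4, h5, hepos, hS0]
  · rw [hGs]
    calc f (∏ i, x i) * Real.exp ((∑ i, t i) / ((k:ℝ)-1))
        ≤ f (∏ i, x i) * Real.exp ((k:ℝ)*ε) := by
          apply mul_le_mul_of_nonneg_left hexp2 hfP.le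
    _ ≤ (∑ i, Gf k f (t i)) * Real.exp ((k:ℝ)*ε) := by
          apply mul_le_mul_of_nonneg_right (le_trans hfS hS_le) (Real.exp_pos _).le
    _ = Real.exp ((k:ℝ)*ε) * ∑ i, Gf k f (t i) := by ring

include hk hfpos hmean in
lemma Gscale {t : ℝ} (ht : 0 < t) : Gf k f ((k:ℝ)*t) = (k:ℝ) * Gf k f t := by
  have hk1 : (2:ℝ) ≤ (k:ℝ) := by exact_mod_cast hk
  have hKne : (k:ℝ) - 1 ≠ 0 := by linarith
  have hx : ∀ i : Fin k, (1:ℝ) < (fun _ : Fin k => Real.exp t) i := by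
    intro i
    calc (1:ℝ) = Real.exp 0 := by simp
    _ < Real.exp t := Real.exp_lt_exp.mpr ht
  obtain ⟨h1, h2⟩ := hmean (fun _ => Real.exp t) hx
  have hinf : Finset.univ.inf' ⟨⟨0, Nat.zero_lt_of_lt hk⟩, Finset.mem_univ _⟩
      (fun _ : Fin k => Real.exp t) = Real.exp t := Finset.inf'_const _ _
  have hsup : Finset.univ.sup' ⟨⟨0, Nat.zero_lt_of_lt hk⟩, Finset.mem_univ _⟩
      (fun _ : Fin k => Real.exp t) = Real.exp t := Finset.sup'_const _ _
  rw [hinf] at h1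
  rw [hsup] at h2
  have hQ : (∑ _i : Fin k, f (Real.exp t)) / f (∏ _i : Fin k, Real.exp t)
      = Real.exp t := le_antisymm h2 h1
  have hprod : (∏ _i : Fin k, Real.exp t) = Real.exp ((k:ℝ)*t) := by
    rw [Finset.prod_const]
    rw [← Real.exp_nat_mul]
    simp
  have hsum : (∑ _i : Fin k, f (Real.exp t)) = (k:ℝ) * f (Real.exp t) := by
    rw [Finset.sum_const]
    simp [nsmul_eq_mul]
  rw [hprod, hsum] at hQ
  have hfkt : 0 < f (Real.exp ((k:ℝ)*t)) := by
    apply hfpos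
    calc (1:ℝ) = Real.exp 0 := by simp
    _ < _ := Real.exp_lt_exp.mpr (by positivity)
  rw [div_eq_iff hfkt.ne'] at hQ
  have hfval : f (Real.exp ((k:ℝ)*t)) = (k:ℝ) * f (Real.exp t) * Real.exp (-t) := by
    have het : Real.exp t ≠ 0 := (Real.exp_pos t).ne'
    rw [Real.exp_neg]
    field_simp
    linarith [hQ]
  show f (Real.exp ((k:ℝ)*t)) * Real.exp ((k:ℝ)*t / ((k:ℝ)-1))
      = (k:ℝ) * (f (Real.exp t) * Real.exp (t / ((k:ℝ)-1)))
  rw [hfval]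
  have hexp : Real.exp (-t) * Real.exp ((k:ℝ)*t / ((k:ℝ)-1))
      = Real.exp (t / ((k:ℝ)-1)) := by
    rw [← Real.exp_add]
    congr 1
    field_simp
    ring_nf
  calc (k:ℝ) * f (Real.exp t) * Real.exp (-t) * Real.exp ((k:ℝ)*t / ((k:ℝ)-1))
      = (k:ℝ) * f (Real.exp t) * (Real.exp (-t) * Real.exp ((k:ℝ)*t / ((k:ℝ)-1))) := by ring
  _ = (k:ℝ) * f (Real.exp t) * Real.exp (t / ((k:ℝ)-1)) := by rw [hexp]
  _ = (k:ℝ) * (f (Real.exp t) * Real.exp (t / ((k:ℝ)-1))) := by ring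

include hk hfpos hmean in
lemma Gdiv {t : ℝ} (ht : 0 < t) (n : ℕ) :
    Gf k f (t / (k:ℝ)^n) = Gf k f t / (k:ℝ)^n := by
  have hkpos : (0:ℝ) < (k:ℝ) := by positivity
  induction n with
  | zero => simp
  | succ n ih =>
    have hkn : (0:ℝ) < (k:ℝ)^n := by positivity
    have h1 : t / (k:ℝ)^n = (k:ℝ) * (t / (k:ℝ)^(n+1)) := by
      field_simp
      ring
    have h2 : 0 < t / (k:ℝ)^(n+1) := by positivity
    have := Gscale k hk f hfpos hmean h2
    rw [← h1] at this
    rw [ih] at this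
    have : Gf k f (t / (k:ℝ)^(n+1)) = Gf k f t / (k:ℝ)^n / (k:ℝ) := by
      field_simp at this ⊢
      linarith
    rw [this]
    rw [div_div, ← pow_succ]

lemma sum_ite_zero' (c d : ℝ) (hk2 : 2 ≤ k) :
    ∑ i : Fin k, (if (i:ℕ) = 0 then c else d) = c + ((k:ℝ)-1)*d := by
  have h0k : 0 < k := Nat.zero_lt_of_lt hk2
  have heq : (fun i : Fin k => if (i:ℕ) = 0 then c else d)
      = fun i : Fin k => d + (if i = (⟨0, h0k⟩ : Fin k) then c - d else 0) := by
    funext i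
    by_cases h : (i:ℕ) = 0
    · have : i = (⟨0, h0k⟩ : Fin k) := by
        apply Fin.ext; simpa using h
      simp [h, this]
    · have : i ≠ (⟨0, h0k⟩ : Fin k) := by
        intro hcon; apply h; rw [hcon]
      simp [h, this]
  rw [heq, Finset.sum_add_distrib, Finset.sum_const, Finset.sum_ite_eq']
  simp [nsmul_eq_mul]
  ring

lemma sum_ite_zo' (c d e : ℝ) (hk2 : 2 ≤ k) :
    ∑ i : Fin k, (if (i:ℕ) = 0 then c else if (i:ℕ) = 1 then d else e)
      = c + d + ((k:ℝ)-2)*e := by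
  have h0k : 0 < k := Nat.zero_lt_of_lt hk2
  have h1k : 1 < k := by omega
  have heq : (fun i : Fin k => if (i:ℕ) = 0 then c else if (i:ℕ) = 1 then d else e)
      = fun i : Fin k => e + ((if i = (⟨0, h0k⟩ : Fin k) then c - e else 0)
          + (if i = (⟨1, h1k⟩ : Fin k) then d - e else 0)) := by
    funext i
    by_cases h : (i:ℕ) = 0
    · have hi : i = (⟨0, h0k⟩ : Fin k) := by apply Fin.ext; simpa using h
      have hi' : i ≠ (⟨1, h1k⟩ : Fin k) := by
        intro hcon; rw [hcon] at h; simp at h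
      simp [h, hi, hi']
    · by_cases h1 : (i:ℕ) = 1
      · have hi : i = (⟨1, h1k⟩ : Fin k) := by apply Fin.ext; simpa using h1
        have hi' : i ≠ (⟨0, h0k⟩ : Fin k) := by
          intro hcon; rw [hcon] at h1; simp at h1
        simp [h, h1, hi, hi']
      · have hi : i ≠ (⟨0, h0k⟩ : Fin k) := by
          intro hcon; apply h; rw [hcon]
        have hi' : i ≠ (⟨1, h1k⟩ : Fin k) := by
          intro hcon; apply h1; rw [hcon]
        simp [h, h1, hi, hi']
  rw [heq, Finset.sum_add_distrib, Finset.sum_add_distrib, Finset.sum_const,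
    Finset.sum_ite_eq', Finset.sum_ite_eq']
  simp [nsmul_eq_mul]
  ring

include hk hfpos hmean in
lemma Gmono {ε a b : ℝ} (hε : 0 < ε) (ha : 0 < a) (hab : a ≤ b) (hb : b ≤ ε) :
    Gf k f a ≤ Real.exp (2*ε) * Gf k f b := by
  have hK1 : (1:ℝ) ≤ (k:ℝ) - 1 := by
    have : (2:ℝ) ≤ (k:ℝ) := by exact_mod_cast hk
    linarith
  rcases eq_or_lt_of_le hab with rfl | hab'
  · have hgp := Gf_pos k hk f hfpos ha
    nlinarith [Real.one_le_exp (by linarith : (0:ℝ) ≤ 2*ε)]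
  · set s : ℝ := (b - a)/((k:ℝ)-1) with hs
    have hs0 : 0 < s := div_pos (by linarith) (by linarith)
    have hsε : s ≤ ε := le_trans (div_le_self (by linarith) hK1) (by linarith)
    set v : Fin k → ℝ := fun i => if (i:ℕ) = 0 then a else s with hv
    have hv0 : ∀ i, 0 < v i := by
      intro i
      by_cases h : (i:ℕ) = 0 <;> simp [hv, h] <;> [exact ha; exact hs0]
    have hvε : ∀ i, v i ≤ ε := by
      intro i
      by_cases h : (i:ℕ) = 0 <;> simp [hv, h] <;> [linarith; exact hsε]
    have hsum : ∑ i, v i = b := by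
      rw [hv, sum_ite_zero' k a s hk, hs]
      field_simp
      ring
    have hsumG : ∑ i, Gf k f (v i) = Gf k f a + ((k:ℝ)-1) * Gf k f s := by
      simp only [hv, apply_ite (Gf k f)]
      exact sum_ite_zero' k _ _ hk
    obtain ⟨hlow, _⟩ := Gkey k hk f hfpos hmean hε v hv0 hvε
    rw [hsum, hsumG] at hlow
    rw [Real.exp_neg] at hlow
    have hX := (inv_mul_le_iff₀ (Real.exp_pos (2*ε))).mp hlow
    have hspos := Gf_pos k hk f hfpos hs0
    nlinarith [hX, hspos, hK1]

include hk hfpos hmean in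
set_option maxHeartbeats 1000000 in
lemma Gsub : ∀ p : ℕ, 1 ≤ p → ∀ ε : ℝ, 0 < ε → ε ≤ 1 → ∀ t : ℝ, 0 < t →
    (p:ℝ)*t ≤ ε →
    Gf k f ((p:ℝ)*t) ≤ Real.exp (((k:ℝ)+1)*(p:ℝ)*ε) * ((p:ℝ) * Gf k f t) := by
  have hk2 : (2:ℝ) ≤ (k:ℝ) := by exact_mod_cast hk
  intro p hp
  induction p, hp using Nat.le_induction with
  | base =>
    intro ε hε hε1 t ht hpt
    push_cast
    simp only [one_mul]
    have hGt := Gf_pos k hk f hfpos ht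
    have h1 : (1:ℝ) ≤ Real.exp (((k:ℝ)+1)*1*ε) := Real.one_le_exp (by positivity)
    nlinarith
  | succ p hp ih =>
    intro ε hε hε1 t ht hpt
    push_cast at hpt ⊢
    have hp1 : (1:ℝ) ≤ (p:ℝ) := by exact_mod_cast hp
    have hGt := Gf_pos k hk f hfpos ht
    obtain ⟨m, hm⟩ : ∃ m : ℕ, ((k:ℝ)-2)/ε < (k:ℝ)^m :=
      pow_unbounded_of_one_lt _ (by linarith)
    have hkm : (0:ℝ) < (k:ℝ)^m := by positivity
    have hms : ((k:ℝ)-2)/(k:ℝ)^m < ε := by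
      rw [div_lt_iff₀ hε] at hm
      rw [div_lt_iff₀ hkm]
      linarith
    have hkm1 : (1:ℝ) ≤ (k:ℝ)^m := one_le_pow₀ (by linarith)
    set s : ℝ := t/(k:ℝ)^m with hsdef
    have hs0 : 0 < s := by positivity
    have hst : s ≤ t := div_le_self ht.le hkm1
    have hGs : Gf k f s = Gf k f t / (k:ℝ)^m := Gdiv k hk f hfpos hmean ht m
    have htε : t ≤ ε := by nlinarith
    have hptε : (p:ℝ)*t ≤ ε := by nlinarith
    have hk2s : ((k:ℝ)-2)*s = (((k:ℝ)-2)/(k:ℝ)^m)*t := by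
      rw [hsdef]; ring
    set b : ℝ := t - ((k:ℝ)-2)*s with hbdef
    have hb0 : 0 < b := by
      rw [hbdef, hk2s]
      nlinarith
    have hbt : b ≤ t := by
      rw [hbdef]
      nlinarith
    set v : Fin k → ℝ := fun i => if (i:ℕ) = 0 then (p:ℝ)*t else if (i:ℕ) = 1 then b else s with hv
    have hv0 : ∀ i, 0 < v i := by
      intro i
      rcases Nat.eq_zero_or_pos (i:ℕ) with h | h
      · simp [hv, h]; positivity
      · by_cases h1 : (i:ℕ) = 1 <;> simp [hv, Nat.pos_iff_ne_zero.mp h, h1]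
        · exact hb0
        · exact hs0
    have hvε : ∀ i, v i ≤ ε := by
      intro i
      rcases Nat.eq_zero_or_pos (i:ℕ) with h | h
      · simp [hv, h]; exact hptε
      · by_cases h1 : (i:ℕ) = 1 <;> simp [hv, Nat.pos_iff_ne_zero.mp h, h1]
        · linarith
        · linarith
    have hsum : ∑ i, v i = ((p:ℝ)+1)*t := by
      rw [hv, sum_ite_zo' k _ _ _ hk, hbdef]
      ring
    have hsumG : ∑ i, Gf k f (v i)
        = Gf k f ((p:ℝ)*t) + Gf k f b + ((k:ℝ)-2) * Gf k f s := by
      simp only [hv, apply_ite (Gf k f)]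
      exact sum_ite_zo' k _ _ _ hk
    obtain ⟨_, hkey⟩ := Gkey k hk f hfpos hmean hε v hv0 hvε
    rw [hsum, hsumG] at hkey
    have hIH := ih ε hε hε1 t ht hptε
    have hB : Gf k f b ≤ Real.exp (2*ε) * Gf k f t :=
      Gmono k hk f hfpos hmean hε hb0 hbt htε
    have hS : ((k:ℝ)-2) * Gf k f s ≤ ε * Gf k f t := by
      rw [hGs]
      have : ((k:ℝ)-2) * (Gf k f t / (k:ℝ)^m) = (((k:ℝ)-2)/(k:ℝ)^m) * Gf k f t := by
        ring
      rw [this]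
      nlinarith
    have hE1 : (0:ℝ) < Real.exp ((k:ℝ)*ε) := Real.exp_pos _
    have hE2 : (1:ℝ) ≤ Real.exp (((k:ℝ)+1)*(p:ℝ)*ε) := Real.one_le_exp (by positivity)
    have hE2p : (0:ℝ) < Real.exp (((k:ℝ)+1)*(p:ℝ)*ε) := Real.exp_pos _
    have h3 : (2:ℝ) ≤ ((k:ℝ)+1)*(p:ℝ) := by nlinarith
    have hE32 : Real.exp (2*ε) ≤ Real.exp (((k:ℝ)+1)*(p:ℝ)*ε) :=
      Real.exp_le_exp.mpr (by nlinarith)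
    calc Gf k f (((p:ℝ)+1)*t)
        ≤ Real.exp ((k:ℝ)*ε) * (Gf k f ((p:ℝ)*t) + Gf k f b + ((k:ℝ)-2) * Gf k f s) := hkey
      _ ≤ Real.exp ((k:ℝ)*ε) * (Real.exp (((k:ℝ)+1)*(p:ℝ)*ε) * ((p:ℝ) * Gf k f t)
            + Real.exp (((k:ℝ)+1)*(p:ℝ)*ε) * Gf k f t
            + Real.exp (((k:ℝ)+1)*(p:ℝ)*ε) * (ε * Gf k f t)) := by
          apply mul_le_mul_of_nonneg_left _ hE1.le
          have h1 : Gf k f b ≤ Real.exp (((k:ℝ)+1)*(p:ℝ)*ε) * Gf k f t :=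
            le_trans hB (mul_le_mul_of_nonneg_right hE32 hGt.le)
          have h2 : ((k:ℝ)-2) * Gf k f s ≤ Real.exp (((k:ℝ)+1)*(p:ℝ)*ε) * (ε * Gf k f t) :=
            le_trans hS (le_mul_of_one_le_left (by positivity) hE2)
          exact add_le_add (add_le_add hIH h1) h2
      _ = (Real.exp ((k:ℝ)*ε) * Real.exp (((k:ℝ)+1)*(p:ℝ)*ε)) * (((p:ℝ)+1+ε) * Gf k f t) := by
          ring
      _ ≤ (Real.exp ((k:ℝ)*ε) * Real.exp (((k:ℝ)+1)*(p:ℝ)*ε))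
            * ((((p:ℝ)+1) * Real.exp ε) * Gf k f t) := by
          apply mul_le_mul_of_nonneg_left _ (by positivity)
          apply mul_le_mul_of_nonneg_right _ hGt.le
          nlinarith [Real.add_one_le_exp ε]
      _ = (Real.exp ((k:ℝ)*ε) * Real.exp (((k:ℝ)+1)*(p:ℝ)*ε) * Real.exp ε)
            * (((p:ℝ)+1) * Gf k f t) := by ring
      _ = Real.exp (((k:ℝ)+1)*((p:ℝ)+1)*ε) * (((p:ℝ)+1) * Gf k f t) := by
          rw [← Real.exp_add, ← Real.exp_add]
          congr 2
          ring

include hk hfpos hmean in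
lemma Gsublim (p : ℕ) (hp : 1 ≤ p) {t : ℝ} (ht : 0 < t) :
    Gf k f ((p:ℝ)*t) ≤ (p:ℝ) * Gf k f t := by
  have hk1R : (1:ℝ) < (k:ℝ) := by exact_mod_cast (by omega : 1 < k)
  have hA : Tendsto (fun n : ℕ => (p:ℝ)*t/(k:ℝ)^n) atTop (𝓝 0) := by
    have h := (tendsto_pow_atTop_atTop_of_one_lt hk1R).inv_tendsto_atTop
    have h2 := h.const_mul ((p:ℝ)*t)
    simpa [div_eq_mul_inv] using h2
  have hB : Tendsto (fun n : ℕ =>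
      Real.exp (((k:ℝ)+1)*(p:ℝ)*((p:ℝ)*t/(k:ℝ)^n)) * ((p:ℝ) * Gf k f t)) atTop
      (𝓝 ((p:ℝ) * Gf k f t)) := by
    have h3 : Tendsto (fun n : ℕ => ((k:ℝ)+1)*(p:ℝ)*((p:ℝ)*t/(k:ℝ)^n)) atTop (𝓝 0) := by
      simpa using hA.const_mul (((k:ℝ)+1)*(p:ℝ))
    have h4 := (Real.continuous_exp.tendsto 0).comp h3
    simp only [Real.exp_zero] at h4
    simpa using h4.mul_const ((p:ℝ) * Gf k f t)
  apply ge_of_tendsto hB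
  have hev : ∀ᶠ n : ℕ in atTop, (p:ℝ)*t/(k:ℝ)^n ≤ 1 :=
    hA.eventually (eventually_le_nhds one_pos)
  filter_upwards [hev] with n hn
  have hkn : (0:ℝ) < (k:ℝ)^n := by positivity
  have htn : 0 < t/(k:ℝ)^n := by positivity
  have hεn : 0 < (p:ℝ)*t/(k:ℝ)^n := by
    have hp0 : (0:ℝ) < (p:ℝ) := by exact_mod_cast hp
    positivity
  have happ := Gsub k hk f hfpos hmean p hp ((p:ℝ)*t/(k:ℝ)^n) hεn hn (t/(k:ℝ)^n) htn
      (le_of_eq (mul_div_assoc (p:ℝ) t ((k:ℝ)^n)).symm)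
  rw [show (p:ℝ)*(t/(k:ℝ)^n) = ((p:ℝ)*t)/(k:ℝ)^n by ring] at happ
  have hpt : 0 < (p:ℝ)*t := by
    have hp0 : (0:ℝ) < (p:ℝ) := by exact_mod_cast hp
    positivity
  rw [Gdiv k hk f hfpos hmean hpt n, Gdiv k hk f hfpos hmean ht n] at happ
  calc Gf k f ((p:ℝ)*t) = (Gf k f ((p:ℝ)*t)/(k:ℝ)^n) * (k:ℝ)^n := by field_simp
  _ ≤ (Real.exp (((k:ℝ)+1)*(p:ℝ)*((p:ℝ)*t/(k:ℝ)^n))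
        * ((p:ℝ) * (Gf k f t/(k:ℝ)^n))) * (k:ℝ)^n :=
      mul_le_mul_of_nonneg_right happ hkn.le
  _ = Real.exp (((k:ℝ)+1)*(p:ℝ)*((p:ℝ)*t/(k:ℝ)^n)) * ((p:ℝ) * Gf k f t) := by
      field_simp

include hk hfpos hmean in
lemma Gmonolim {a b : ℝ} (ha : 0 < a) (hab : a ≤ b) : Gf k f a ≤ Gf k f b := by
  have hk1R : (1:ℝ) < (k:ℝ) := by exact_mod_cast (by omega : 1 < k)
  have hb : 0 < b := lt_of_lt_of_le ha hab
  have hA : Tendsto (fun n : ℕ => b/(k:ℝ)^n) atTop (𝓝 0) := by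
    have h := (tendsto_pow_atTop_atTop_of_one_lt hk1R).inv_tendsto_atTop
    have h2 := h.const_mul b
    simpa [div_eq_mul_inv] using h2
  have hB : Tendsto (fun n : ℕ => Real.exp (2*(b/(k:ℝ)^n)) * Gf k f b) atTop
      (𝓝 (Gf k f b)) := by
    have h3 : Tendsto (fun n : ℕ => 2*(b/(k:ℝ)^n)) atTop (𝓝 0) := by
      simpa using hA.const_mul 2
    have h4 := (Real.continuous_exp.tendsto 0).comp h3
    simp only [Real.exp_zero] at h4
    simpa using h4.mul_const (Gf k f b)
  apply ge_of_tendsto hB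
  apply Filter.Eventually.of_forall
  intro n
  have hkn : (0:ℝ) < (k:ℝ)^n := by positivity
  have han : 0 < a/(k:ℝ)^n := by positivity
  have hεn : 0 < b/(k:ℝ)^n := by positivity
  have habn : a/(k:ℝ)^n ≤ b/(k:ℝ)^n := by
    gcongr
  have happ := Gmono k hk f hfpos hmean hεn han habn le_rfl
  rw [Gdiv k hk f hfpos hmean ha n, Gdiv k hk f hfpos hmean hb n] at happ
  calc Gf k f a = (Gf k f a/(k:ℝ)^n) * (k:ℝ)^n := by field_simp
  _ ≤ (Real.exp (2*(b/(k:ℝ)^n)) * (Gf k f b/(k:ℝ)^n)) * (k:ℝ)^n :=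
      mul_le_mul_of_nonneg_right happ hkn.le
  _ = Real.exp (2*(b/(k:ℝ)^n)) * Gf k f b := by field_simp

include hk hfpos hmean in
lemma Glin {a b : ℝ} (ha : 0 < a) (hb : 0 < b) : Gf k f b ≤ (b/a) * Gf k f a := by
  have hk1R : (1:ℝ) < (k:ℝ) := by exact_mod_cast (by omega : 1 < k)
  have hGa := Gf_pos k hk f hfpos ha
  have hB : Tendsto (fun m : ℕ => (b/a + ((k:ℝ)^m)⁻¹) * Gf k f a) atTop
      (𝓝 ((b/a) * Gf k f a)) := by
    have h := (tendsto_pow_atTop_atTop_of_one_lt hk1R).inv_tendsto_atTop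
    have h2 := (h.const_add (b/a)).mul_const (Gf k f a)
    simpa using h2
  apply ge_of_tendsto hB
  apply Filter.Eventually.of_forall
  intro m
  have hkm : (0:ℝ) < (k:ℝ)^m := by positivity
  set p : ℕ := ⌈(b/a)*(k:ℝ)^m⌉₊ with hpdef
  have hp : 1 ≤ p := by
    rw [hpdef, Nat.one_le_iff_ne_zero, ← Nat.pos_iff_ne_zero, Nat.ceil_pos]
    positivity
  have hple : (b/a)*(k:ℝ)^m ≤ (p:ℝ) := Nat.le_ceil _
  have hplt : (p:ℝ) < (b/a)*(k:ℝ)^m + 1 := Nat.ceil_lt_add_one (by positivity)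
  have ham : 0 < a/(k:ℝ)^m := by positivity
  have hb_le : b ≤ (p:ℝ)*(a/(k:ℝ)^m) := by
    have h5 := mul_le_mul_of_nonneg_right hple ham.le
    have h6 : (b/a)*(k:ℝ)^m * (a/(k:ℝ)^m) = b := by field_simp
    linarith [h5, h6.symm.le]
  calc Gf k f b ≤ Gf k f ((p:ℝ)*(a/(k:ℝ)^m)) :=
      Gmonolim k hk f hfpos hmean hb hb_le
  _ ≤ (p:ℝ) * Gf k f (a/(k:ℝ)^m) := Gsublim k hk f hfpos hmean p hp ham
  _ = ((p:ℝ)/(k:ℝ)^m) * Gf k f a := by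
      rw [Gdiv k hk f hfpos hmean ha m]; ring
  _ ≤ (b/a + ((k:ℝ)^m)⁻¹) * Gf k f a := by
      apply mul_le_mul_of_nonneg_right _ hGa.le
      rw [div_le_iff₀ hkm]
      have : (b/a + ((k:ℝ)^m)⁻¹) * (k:ℝ)^m = (b/a)*(k:ℝ)^m + 1 := by
        field_simp
      linarith

end helpers

theorem stmt_8 (k : ℕ) (hk : 2 ≤ k) (f : ℝ → ℝ)
    (hfpos : ∀ x > (1:ℝ), 0 < f x)
    (hmean : ∀ x : Fin k → ℝ, (∀ i, 1 < x i) →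
        Finset.univ.inf' ⟨⟨0, by omega⟩, Finset.mem_univ _⟩ x ≤
            (∑ i, f (x i)) / f (∏ i, x i) ∧
          (∑ i, f (x i)) / f (∏ i, x i) ≤
            Finset.univ.sup' ⟨⟨0, by omega⟩, Finset.mem_univ _⟩ x) :
    ∃ c > 0, ∀ x > (1:ℝ), f x = c * Real.log x / x ^ ((1:ℝ) / ((k:ℝ) - 1)) := by
  have hc : 0 < Gf k f 1 := Gf_pos k hk f hfpos one_pos
  refine ⟨Gf k f 1, hc, ?_⟩
  intro x hx
  have hlx : 0 < Real.log x := Real.log_pos hx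
  have hGt : Gf k f (Real.log x) = Gf k f 1 * Real.log x := by
    have h1 : Gf k f (Real.log x) ≤ (Real.log x / 1) * Gf k f 1 :=
      Glin k hk f hfpos hmean one_pos hlx
    have h2 : Gf k f 1 ≤ (1/Real.log x) * Gf k f (Real.log x) :=
      Glin k hk f hfpos hmean hlx one_pos
    rw [div_one] at h1
    have h3 : Real.log x * Gf k f 1 ≤ Gf k f (Real.log x) := by
      have h4 := mul_le_mul_of_nonneg_left h2 hlx.le
      rw [show Real.log x * ((1/Real.log x) * Gf k f (Real.log x))
          = Gf k f (Real.log x) from by field_simp] at h4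
      linarith
    linarith
  have hx0 : (0:ℝ) < x := by linarith
  have hexp : Real.exp (Real.log x) = x := Real.exp_log hx0
  have hGdef : Gf k f (Real.log x) = f x * Real.exp (Real.log x / ((k:ℝ)-1)) := by
    rw [Gf, hexp]
  have hrpow : x ^ ((1:ℝ)/((k:ℝ)-1)) = Real.exp (Real.log x / ((k:ℝ)-1)) := by
    rw [Real.rpow_def_of_pos hx0]
    congr 1
    ring
  rw [hrpow]
  have hEpos : 0 < Real.exp (Real.log x / ((k:ℝ)-1)) := Real.exp_pos _
  rw [eq_div_iff hEpos.ne', ← hGdef]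
  exact hGt
end

section
/- Let k ≥ 2 and let f : (1,∞) → (0,∞) satisfy the reflexivity equation f(x) = (x/k)·f(x^k) for all x > 1. Suppose there exists c > 0 such that the function φ(x) := (f(x) − c(x−1))/(x−1)² is bounded on some interval (1, 1+r) with r > 0. Then f(x) = c·(log x)/x^(1/(k-1)) for all x ∈ (1,∞). -/
open Real Set Filter Topology

theorem stmt_12 (k : ℕ) (hk : 2 ≤ k) (f : ℝ → ℝ)
    (hfpos : ∀ x > (1:ℝ), 0 < f x)
    (hrefl : ∀ x > (1:ℝ), f x = x / k * f (x ^ k))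
    (c : ℝ) (hc : 0 < c)
    (hbd : ∃ r > (0:ℝ), ∃ Cb : ℝ, ∀ x ∈ Set.Ioo (1:ℝ) (1 + r),
        |(f x - c * (x - 1)) / (x - 1) ^ 2| ≤ Cb) :
    ∀ x > (1:ℝ), f x = c * Real.log x / x ^ ((1:ℝ) / ((k:ℝ) - 1)) := by
  obtain ⟨r, hr, Cb, hCb⟩ := hbd
  set a : ℝ := (1:ℝ) / ((k:ℝ) - 1) with ha
  have hk1 : (1:ℝ) < (k:ℝ) := by exact_mod_cast lt_of_lt_of_le one_lt_two hk
  have hk0 : (0:ℝ) < (k:ℝ) := lt_trans one_pos hk1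
  have hkm1 : ((k:ℝ) - 1) ≠ 0 := by linarith
  have hka : (k:ℝ) * a = a + 1 := by rw [ha, mul_one_div, div_add_one hkm1]; ring
  set h : ℝ → ℝ := fun y => f y * y ^ a / Real.log y with hh
  -- step: h y = h (y^k)
  have step : ∀ y > (1:ℝ), h y = h (y ^ k) := by
    intro y hy
    have hy0 : (0:ℝ) < y := lt_trans one_pos hy
    have hyk : (1:ℝ) < y ^ k := one_lt_pow₀ hy (by omega)
    have hfy : f (y ^ k) = (k:ℝ) / y * f y := by
      have h1 := hrefl y hy
      field_simp [hy0.ne', hk0.ne'] at h1 ⊢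
      linarith
    have hpow : ((y:ℝ) ^ k : ℝ) ^ a = y ^ a * y := by
      rw [← Real.rpow_natCast y k, ← Real.rpow_mul hy0.le, hka,
        Real.rpow_add hy0, Real.rpow_one]
    have hlog : Real.log (y ^ k) = (k:ℝ) * Real.log y := by
      rw [Real.log_pow]
    simp only [hh, hfy, hpow, hlog]
    have hlogy : Real.log y ≠ 0 := ne_of_gt (Real.log_pos hy)
    field_simp
  intro x hx
  have hx0 : (0:ℝ) < x := lt_trans one_pos hx
  have hlx : 0 < Real.log x := Real.log_pos hx
  -- sequence t n = x ^ (1 / k^n)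
  set t : ℕ → ℝ := fun n => x ^ ((1:ℝ) / (k:ℝ) ^ n) with ht
  have htpos : ∀ n, (1:ℝ) < t n := by
    intro n
    exact (Real.one_lt_rpow_iff_of_pos hx0).2 (Or.inl ⟨hx, by positivity⟩)
  have htstep : ∀ n, (t (n + 1)) ^ k = t n := by
    intro n
    rw [ht]
    rw [← Real.rpow_natCast (x ^ ((1:ℝ) / (k:ℝ) ^ (n+1))) k,
      ← Real.rpow_mul hx0.le]
    congr 1
    field_simp
    rw [pow_succ]
    ring
  have hconst : ∀ n, h (t n) = h x := by
    intro n
    induction n with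
    | zero => simp [ht]
    | succ m ih =>
      rw [step (t (m+1)) (htpos (m+1)), htstep m, ih]
  -- t n → 1
  have htend : Tendsto t atTop (𝓝 1) := by
    have h1 : Tendsto (fun n : ℕ => (1:ℝ) / (k:ℝ) ^ n) atTop (𝓝 0) := by
      simp only [one_div]
      exact tendsto_inv_atTop_zero.comp (tendsto_pow_atTop_atTop_of_one_lt hk1)
    have h2 : Tendsto (fun n : ℕ => x ^ ((1:ℝ) / (k:ℝ) ^ n)) atTop (𝓝 (x ^ (0:ℝ))) :=
      (Real.continuousAt_const_rpow hx0.ne').tendsto.comp h1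
    rw [Real.rpow_zero] at h2
    exact h2
  -- A n = f (t n) / (t n - 1) → c
  have hA : Tendsto (fun n => f (t n) / (t n - 1)) atTop (𝓝 c) := by
    have hd : Tendsto (fun n => f (t n) / (t n - 1) - c) atTop (𝓝 0) := by
      apply squeeze_zero_norm' (a := fun n => Cb * (t n - 1))
      · have hev : ∀ᶠ n in atTop, t n < 1 + r :=
          htend.eventually (Filter.Tendsto.eventually_lt_const (by linarith) tendsto_id)
        filter_upwards [hev] with n hn
        have h1 : (1:ℝ) < t n := htpos n
        have hb := hCb (t n) ⟨h1, hn⟩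
        have hy1 : (0:ℝ) < t n - 1 := by linarith
        have heq : f (t n) / (t n - 1) - c
            = ((f (t n) - c * (t n - 1)) / (t n - 1) ^ 2) * (t n - 1) := by
          field_simp
        rw [Real.norm_eq_abs, heq, abs_mul, abs_of_pos hy1]
        exact mul_le_mul_of_nonneg_right hb hy1.le
      · have h2 : Tendsto (fun n => Cb * (t n - 1)) atTop (𝓝 (Cb * (1 - 1))) :=
          tendsto_const_nhds.mul (htend.sub tendsto_const_nhds)
        simpa using h2
    have h3 := hd.add_const c
    simpa using h3
  -- B n = log (t n) / (t n - 1) → 1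
  have hB : Tendsto (fun n => Real.log (t n) / (t n - 1)) atTop (𝓝 1) := by
    have hslope : Tendsto (slope Real.log 1) (𝓝[≠] (1:ℝ)) (𝓝 1) := by
      have hder := (Real.hasDerivAt_log one_ne_zero)
      rw [hasDerivAt_iff_tendsto_slope] at hder
      simpa using hder
    have hts : Tendsto t atTop (𝓝[≠] (1:ℝ)) := by
      rw [tendsto_nhdsWithin_iff]
      exact ⟨htend, Eventually.of_forall fun n => ne_of_gt (htpos n)⟩
    apply (hslope.comp hts).congr
    intro n
    simp [Function.comp, slope_def_field, Real.log_one]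
  -- C n = (t n) ^ a → 1
  have hC : Tendsto (fun n => (t n) ^ a) atTop (𝓝 1) := by
    have h4 : Tendsto (fun n => (t n) ^ a) atTop (𝓝 ((1:ℝ) ^ a)) :=
      (Real.continuousAt_rpow_const 1 a (Or.inl one_ne_zero)).tendsto.comp htend
    simpa using h4
  -- combine: h (t n) → c
  have hcomb : Tendsto (fun n => h (t n)) atTop (𝓝 c) := by
    have h5 := (hA.mul hC).div hB one_ne_zero
    apply Tendsto.congr _ (by simpa using h5)
    intro n
    have h1 : (1:ℝ) < t n := htpos n
    have hy1 : t n - 1 ≠ 0 := by linarith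
    have hlog : Real.log (t n) ≠ 0 := ne_of_gt (Real.log_pos h1)
    have hy2 : -1 + t n ≠ 0 := by linarith
    simp only [hh, Pi.div_apply]
    field_simp
    try ring
  have hhx : h x = c := by
    have h6 : Tendsto (fun n => h (t n)) atTop (𝓝 (h x)) := by
      simp only [hconst]; exact tendsto_const_nhds
    exact tendsto_nhds_unique h6 hcomb
  have hxa : (0:ℝ) < x ^ a := Real.rpow_pos_of_pos hx0 a
  have h7 : f x * x ^ a / Real.log x = c := hhx
  rw [div_eq_iff hlx.ne'] at h7
  rw [eq_div_iff hxa.ne']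
  exact h7
end

section
/- Let k ≥ 2 and suppose ψ : (1,∞) → ℝ is nonnegative and bounded on (1,∞), and satisfies ψ(x) = k·x^(-1/k)·((x^(1/k)−1)/(x−1))²·ψ(x^(1/k)) for all x > 1. Then ψ ≡ 0 on (1,∞). -/
open Real Set
open Filter Topology

/-!
Writing `y = x^(1/k)`, the multiplier equals `k y⁻¹ ((y - 1)/(y^k - 1))²`, which Bernoulli's
inequality `y^k - 1 ≥ k (y - 1)` bounds by `1/k`. Hence `ψ x ≤ ψ (x^(1/k)) / k`, and iterating
`n` times against the bound `C` gives `ψ x ≤ C / k^n → 0`.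
-/

theorem eq_zero_of_le_mul_comp {α : Type*} {S : Set α} {f : α → ℝ} {g : α → α} {c C : ℝ}
    (hc₀ : 0 ≤ c) (hc₁ : c < 1) (hg : MapsTo g S S) (hf₀ : ∀ x ∈ S, 0 ≤ f x)
    (hC : ∀ x ∈ S, f x ≤ C) (hfg : ∀ x ∈ S, f x ≤ c * f (g x)) :
    ∀ x ∈ S, f x = 0 := by
  have hpow : ∀ n : ℕ, ∀ x ∈ S, f x ≤ C * c ^ n := by
    intro n
    induction n with
    | zero => simpa using hC
    | succ n ih =>
      intro x hx
      calc f x ≤ c * f (g x) := hfg x hx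
        _ ≤ c * (C * c ^ n) := mul_le_mul_of_nonneg_left (ih _ (hg hx)) hc₀
        _ = C * c ^ (n + 1) := by ring
  intro x hx
  have hlim : Tendsto (fun n : ℕ => C * c ^ n) atTop (𝓝 0) := by
    simpa using (tendsto_pow_atTop_nhds_zero_of_lt_one hc₀ hc₁).const_mul C
  exact le_antisymm (ge_of_tendsto' hlim fun n => hpow n x hx) (hf₀ x hx)

theorem sub_one_div_pow_sub_one_le {y : ℝ} (hy : 1 < y) {k : ℕ} (hk : k ≠ 0) :
    (y - 1) / (y ^ k - 1) ≤ 1 / (k : ℝ) := by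
  have hk₀ : (0 : ℝ) < k := by positivity
  have hbernoulli : 1 + k * (y - 1) ≤ (1 + (y - 1)) ^ k := one_add_mul_le_pow (by linarith) k
  rw [add_sub_cancel] at hbernoulli
  rw [div_le_div_iff₀ (by nlinarith) hk₀]
  linarith

theorem mul_inv_mul_sub_one_div_pow_sub_one_sq_le {y : ℝ} (hy : 1 < y) {k : ℕ} (hk : k ≠ 0) :
    (k : ℝ) * y⁻¹ * ((y - 1) / (y ^ k - 1)) ^ 2 ≤ 1 / (k : ℝ) := by
  have hk₀ : (0 : ℝ) < k := by positivity
  have hfrac₀ : 0 ≤ (y - 1) / (y ^ k - 1) :=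
    div_nonneg (by linarith) (by linarith [one_lt_pow₀ hy hk])
  calc (k : ℝ) * y⁻¹ * ((y - 1) / (y ^ k - 1)) ^ 2 ≤ k * 1 * (1 / (k : ℝ)) ^ 2 := by
        gcongr (k : ℝ) * ?_ * ?_ ^ 2
        · exact inv_le_one_of_one_le₀ hy.le
        · exact sub_one_div_pow_sub_one_le hy hk
    _ = 1 / (k : ℝ) := by field_simp

theorem stmt_14 (k : ℕ) (hk : 2 ≤ k) (ψ : ℝ → ℝ)
    (hnonneg : ∀ x > (1:ℝ), 0 ≤ ψ x)
    (hbd : ∃ Cb : ℝ, ∀ x > (1:ℝ), ψ x ≤ Cb)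
    (heq : ∀ x > (1:ℝ),
        ψ x = (k:ℝ) * x ^ (-(1:ℝ) / k) * ((x ^ ((1:ℝ) / k) - 1) / (x - 1)) ^ 2 *
          ψ (x ^ ((1:ℝ) / k))) :
    ∀ x > (1:ℝ), ψ x = 0 := by
  obtain ⟨C, hC⟩ := hbd
  have hk₀ : k ≠ 0 := by omega
  have hroot : MapsTo (fun x : ℝ => x ^ ((1:ℝ) / k)) (Ioi 1) (Ioi 1) := fun x (hx : 1 < x) =>
    one_lt_rpow hx (by positivity)
  refine eq_zero_of_le_mul_comp (c := 1 / k) (by positivity) ?_ hroot hnonneg hC ?_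
  · rw [div_lt_one (by positivity)]
    exact_mod_cast hk
  intro x (hx : 1 < x)
  set y := x ^ ((1:ℝ) / k)
  have hy : 1 < y := hroot hx
  have hyk : y ^ k = x := by
    simp only [y, one_div]
    exact rpow_inv_natCast_pow (by linarith) hk₀
  have hneg : x ^ (-(1:ℝ) / k) = y⁻¹ := by
    rw [neg_div, rpow_neg (by linarith)]
  have hmul := mul_inv_mul_sub_one_div_pow_sub_one_sq_le hy hk₀
  rw [hyk] at hmul
  rw [heq x hx, hneg]
  exact mul_le_mul_of_nonneg_right hmul (hnonneg y hy)
end
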